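/- arXiv:1212.5742 — 3 statements merged into one kernel-verified Lean document; each statement's English description precedes it below -/
import Mathlib

section
/- With rank-2 notation, let [X_{s_1}] be supported on {1,s_1} with both values y_{R⁻}/y_{-α_1}, and let [X_{s_2s_1}] be supported on {1, s_1, s_2, s_2s_1} with values [X_{s_2s_1}]_1 = [X_{s_2s_1}]_{s_2} = y_{R⁻}/(y_{-α_1}y_{-α_2}) and [X_{s_2s_1}]_{s_1} = [X_{s_2s_1}]_{s_2s_1} = y_{R⁻}/(y_{-α_1}y_{-s_1α_2}). Then the pointwise product expands as [X_{s_1}]·[X_{s_2s_1}] = (y_{R⁻}/(y_{-α_1}y_{-s_1α_2}))·[X_{s_1}] + (y_{R⁻}/(y_{-α_2}y_{-α_1}y_{-s_1α_2}))·((y_{-s_1α_2} - y_{-α_2})/y_{-α_1})·[X_1], where (y_{-s_1α_2} - y_{-α_2})/y_{-α_1} is an element of S (i.e. y_{-α_1} divides y_{-s_1α_2} - y_{-α_2} in S). -/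
/-- Rank-2 moment graph model.  Here `β = s₁α₂ = jα₁ + α₂` is a positive
root distinct from `α₁` and `α₂`, and `y_{-α₁}` divides `y_{-s₁α₂} - y_{-α₂}` with
quotient `q` (hypothesis `hq`, which holds in the formal-group-law ring).  The classes
are: `[X_1]` supported at `1` with value `y_{R⁻}`; `[X_{s₁}]` supported on `{1,s₁}` with
values `y_{R⁻}/y_{-α₁}`; `[X_{s₂s₁}]` supported on `{1,s₁,s₂,s₂s₁}` with values
`y_{R⁻}/(y_{-α₁}y_{-α₂})` at `1, s₂` and `y_{R⁻}/(y_{-α₁}y_{-s₁α₂})` at `s₁, s₂s₁`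
(quotients realized as products over `R⁺` with the corresponding roots removed).  Then
`[X_{s₁}]·[X_{s₂s₁}] = (y_{R⁻}/(y_{-α₁}y_{-s₁α₂}))·[X_{s₁}]
   + (y_{R⁻}/(y_{-α₂}y_{-α₁}y_{-s₁α₂}))·((y_{-s₁α₂} - y_{-α₂})/y_{-α₁})·[X_1]`. -/
theorem rank2_Xs1_mul_Xs2s1 {S : Type*} [CommRing S]
    {Λ : Type*} [AddCommGroup Λ] [DecidableEq Λ]
    {W₀ : Type*} [Group W₀] [DecidableEq W₀]
    (y : Λ → S) (Rpos : Finset Λ) (α1 α2 β : Λ)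
    (hα1 : α1 ∈ Rpos) (hα2 : α2 ∈ Rpos) (hβ : β ∈ Rpos)
    (hα12 : α1 ≠ α2) (hβ1 : β ≠ α1) (hβ2 : β ≠ α2)
    (q : S) (hq : y (-β) - y (-α2) = y (-α1) * q)
    (s1 s2 : W₀) (hs1 : s1 ≠ 1) (hs2 : s2 ≠ 1) (hss : s1 ≠ s2)
    (hs21a : s2 * s1 ≠ 1) (hs21b : s2 * s1 ≠ s1) (hs21c : s2 * s1 ≠ s2) :
    let X1 : W₀ → S := fun w => if w = 1 then ∏ α ∈ Rpos, y (-α) else 0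
    let Xs1 : W₀ → S := fun w =>
      if w = 1 ∨ w = s1 then ∏ α ∈ Rpos.erase α1, y (-α) else 0
    let Xs2s1 : W₀ → S := fun w =>
      if w = 1 ∨ w = s2 then ∏ α ∈ (Rpos.erase α1).erase α2, y (-α)
      else if w = s1 ∨ w = s2 * s1 then ∏ α ∈ (Rpos.erase α1).erase β, y (-α)
      else 0
    ∀ w : W₀, Xs1 w * Xs2s1 w
      = (∏ α ∈ (Rpos.erase α1).erase β, y (-α)) * Xs1 w
        + (∏ α ∈ ((Rpos.erase α1).erase α2).erase β, y (-α)) * q * X1 w := by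
  intro X1 Xs1 Xs2s1 w
  have hβ' : β ∈ (Rpos.erase α1).erase α2 :=
    Finset.mem_erase.mpr ⟨hβ2, Finset.mem_erase.mpr ⟨hβ1, hβ⟩⟩
  have hα2' : α2 ∈ Rpos.erase α1 := Finset.mem_erase.mpr ⟨hα12.symm, hα2⟩
  set A : S := ∏ α ∈ ((Rpos.erase α1).erase α2).erase β, y (-α) with hA
  have h3 : ∏ α ∈ (Rpos.erase α1).erase α2, y (-α) = y (-β) * A :=
    (Finset.mul_prod_erase _ _ hβ').symm
  have h2 : ∏ α ∈ Rpos.erase α1, y (-α) = y (-α2) * (y (-β) * A) := by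
    rw [← h3]; exact (Finset.mul_prod_erase _ _ hα2').symm
  have h1 : ∏ α ∈ Rpos, y (-α) = y (-α1) * (y (-α2) * (y (-β) * A)) := by
    rw [← h2]; exact (Finset.mul_prod_erase _ _ hα1).symm
  have h4 : ∏ α ∈ (Rpos.erase α1).erase β, y (-α) = y (-α2) * A := by
    have hα2'' : α2 ∈ (Rpos.erase α1).erase β :=
      Finset.mem_erase.mpr ⟨fun h => hβ2 h.symm, hα2'⟩
    rw [← Finset.mul_prod_erase _ _ hα2'', Finset.erase_right_comm, ← hA]
  simp only [X1, Xs1, Xs2s1]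
  by_cases h : w = 1
  · rw [if_pos h, if_pos (Or.inl h), if_pos (Or.inl h), h1, h2, h3, h4]
    linear_combination (y (-α2) * y (-β) * A * A) * hq
  · rw [if_neg h]
    by_cases hw1 : w = s1
    · rw [if_pos (Or.inr hw1),
        if_neg (by rintro (h' | h'); exacts [h h', hss (hw1.symm.trans h')]),
        if_pos (Or.inl hw1)]
      ring
    · rw [if_neg (by rintro (h' | h'); exacts [h h', hw1 h'])]
      ring
end

section
/- Let F be a formal group law over L written F(x,y) = x + y - p(x,y)xy, and let λ be a weight with ⟨λ, α_i^∨⟩ =: m ∈ ℤ_{≥0}, so s_iλ = λ - mα_i. In the ring S = L[[y_μ]] with y addition governed by F, the element y_{s_iλ} - y_λ is divisible by y_{-α_i}, and the quotient satisfies (y_{s_iλ} - y_λ)/y_{-α_i} = (1 - p(y_λ, y_{-mα_i})·y_λ)·(1 + Σ_{j=1}^{m-1}(1 - p(y_{-α_i}, y_{-jα_i})·y_{-jα_i})). -/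
/-- Let `F(x,y) = x + y - p(x,y)xy` be a formal group law over `L`,
`P a b` denoting `p` evaluated at `(a,b)` (symmetric since `F` is commutative).
In `S = L[[y_μ]]`, let `ya = y_{-α_i}`, `yl = y_λ`, and let `ms n = y_{-nα_i} = [n](ya)`
be the n-fold formal sum (`ms 1 = ya`, `ms (n+1) = F(ms n, ya)`).  For a weight `λ` with
`⟨λ,α_i^∨⟩ = m ≥ 1` one has `s_iλ = λ - mα_i`, so `Y := y_{s_iλ}` satisfies
`Y = F(yl, ms m)`.  Then `y_{-α_i}` divides `y_{s_iλ} - y_λ` and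
`(y_{s_iλ} - y_λ)/y_{-α_i}
   = (1 - p(y_λ, y_{-mα_i})·y_λ)·(1 + Σ_{j=1}^{m-1}(1 - p(y_{-α_i}, y_{-jα_i})·y_{-jα_i}))`. -/
theorem reflection_difference_divisible {L : Type*} [CommRing L]
    (P : PowerSeries L → PowerSeries L → PowerSeries L)
    (hP : ∀ a b, P a b = P b a)
    (ya yl Y : PowerSeries L) (m : ℕ) (hm : 1 ≤ m)
    (ms : ℕ → PowerSeries L)
    (hms1 : ms 1 = ya)
    (hmsrec : ∀ n, 1 ≤ n → ms (n + 1) = ms n + ya - P (ms n) ya * ms n * ya)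
    (hY : Y = yl + ms m - P yl (ms m) * yl * ms m) :
    ya ∣ (Y - yl) ∧
    Y - yl = ya * ((1 - P yl (ms m) * yl) *
        (1 + ∑ j ∈ Finset.Ico 1 m, (1 - P ya (ms j) * ms j))) := by
  have key : ∀ n, 1 ≤ n → ms n = ya * (1 + ∑ j ∈ Finset.Ico 1 n, (1 - P ya (ms j) * ms j)) := by
    intro n hn
    induction n with
    | zero => omega
    | succ k ih =>
      rcases Nat.lt_or_ge k 1 with h | hk
      · have hk0 : k = 0 := by omega
        subst hk0
        simp [hms1, Finset.Ico_self]
      · rw [hmsrec k hk, hP (ms k) ya, Finset.sum_Ico_succ_top hk, ih hk]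
        ring
  have hmm := key m hm
  have heq : Y - yl = ya * ((1 - P yl (ms m) * yl) *
      (1 + ∑ j ∈ Finset.Ico 1 m, (1 - P ya (ms j) * ms j))) := by
    rw [hY]
    nth_rewrite 1 [hmm]; nth_rewrite 2 [hmm]
    ring
  exact ⟨⟨_, heq⟩, heq⟩
end

section
/- In the nil affine Hecke algebra with W₀ of rank 2 satisfying the braid relation s₁s₂s₁ = s₂s₁s₂ (type A₂, so s₁α₂ = s₂α₁ = α₁ + α₂ =: α₃), the identity t_{s_1}t_{s_2}t_{s_1} = t_{s_2}t_{s_1}t_{s_2} is equivalent to the 'twisted braid relation' for the BGG-Demazure operators: A₂A₁A₂ - ((x_{-α_2}x_{-α_1})^{-1} - (x_{-α_1}x_{-α_3})^{-1} + (x_{α_2}x_{-α_3})^{-1})·A₂ = A₁A₂A₁ - ((x_{-α_1}x_{-α_2})^{-1} - (x_{-α_2}x_{-α_3})^{-1} + (x_{α_1}x_{-α_3})^{-1})·A₁. -/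
lemma expand_aux {A : Type*} [Ring A] {L : Type*} [AddCommGroup L]
    (X : L -> A) (s1 s2 : L ≃+ L) (t1 t2 : A) (a1 a2 : L)
    (hcX : ∀ μ ν : L, X μ * X ν = X ν * X μ)
    (ht2 : t2 * t2 = 1)
    (hs1 : s1 a1 = -a1) (hs2 : s2 a2 = -a2)
    (hs12 : s1 a2 = a1 + a2) (hs21 : s2 a1 = a1 + a2)
    (hX1 : ∀ μ : L, t1 * X μ = X (s1 μ) * t1)
    (hX2 : ∀ μ : L, t2 * X μ = X (s2 μ) * t2) :
    ((1 + t2) * X (-a2)) * ((1 + t1) * X (-a1)) * ((1 + t2) * X (-a2))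
      - (X (-a1) * X (-a2) - X (-(a1 + a2)) * X (-a1) + X (-(a1 + a2)) * X a2)
        * ((1 + t2) * X (-a2))
    = X (-a1) * X (-(a1+a2)) * X (-a2)
      + X (-a1) * X (-(a1+a2)) * X a2 * t2
      + X (-a2) * X (-(a1+a2)) * X a1 * t1
      + X a1 * X (a1+a2) * X (-a2) * (t1 * t2)
      + X (-a1) * X a2 * X (a1+a2) * (t2 * t1)
      + X a1 * X (a1+a2) * X a2 * (t2 * t1 * t2) := by
  have v1 : s1 (-a1) = a1 := by rw [map_neg, hs1, neg_neg]
  have v2 : s1 (-a2) = -(a1+a2) := by rw [map_neg, hs12]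
  have v3 : s1 (a1+a2) = a2 := by rw [map_add, hs1, hs12]; abel
  have v4 : s1 (-(a1+a2)) = -a2 := by rw [map_neg, v3]
  have w1 : s2 (-a2) = a2 := by rw [map_neg, hs2, neg_neg]
  have w2 : s2 (-a1) = -(a1+a2) := by rw [map_neg, hs21]
  have w3 : s2 (a1+a2) = a1 := by rw [map_add, hs21, hs2]; abel
  have w4 : s2 (-(a1+a2)) = -a1 := by rw [map_neg, w3]
  have p1 : ∀ (μ : L) (y : A), t1 * (X μ * y) = X (s1 μ) * (t1 * y) := by
    intro μ y; rw [← mul_assoc, hX1, mul_assoc]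
  have p2 : ∀ (μ : L) (y : A), t2 * (X μ * y) = X (s2 μ) * (t2 * y) := by
    intro μ y; rw [← mul_assoc, hX2, mul_assoc]
  have q2 : ∀ y : A, t2 * (t2 * y) = y := by
    intro y; rw [← mul_assoc, ht2, one_mul]
  have c2 : ∀ (μ ν : L) (y : A), X μ * (X ν * y) = X ν * (X μ * y) := by
    intro μ ν y; rw [← mul_assoc, hcX, mul_assoc]
  simp only [sub_mul, add_mul, mul_add, one_mul, mul_one, mul_assoc]
  simp only [p1, p2, q2, hX1, hX2, ht2, mul_one, v1, v2, v3, v4, hs1, hs12,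
    w1, w2, w3, w4, hs2, hs21]
  simp only [hcX, c2]
  abel



/-- In the type `A₂` nil affine Hecke algebra (so `σ₁α₂ = σ₂α₁ = α₁+α₂ = α₃`),
the braid relation `t_{s₁}t_{s₂}t_{s₁} = t_{s₂}t_{s₁}t_{s₂}` is equivalent to the twisted
braid relation for BGG-Demazure operators:
`A₂A₁A₂ - ((x_{-α₂}x_{-α₁})⁻¹ - (x_{-α₁}x_{-α₃})⁻¹ + (x_{α₂}x_{-α₃})⁻¹)·A₂
 = A₁A₂A₁ - ((x_{-α₁}x_{-α₂})⁻¹ - (x_{-α₂}x_{-α₃})⁻¹ + (x_{α₁}x_{-α₃})⁻¹)·A₁`,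
where `Aᵢ = (1+tᵢ)·x_{-αᵢ}⁻¹`. -/
theorem braid_relation_equivalence {A : Type*} [Ring A] {Λ : Type*} [AddCommGroup Λ]
    (x : Λ → Aˣ) (σ1 σ2 : Λ ≃+ Λ) (t1 t2 : A) (α1 α2 : Λ)
    (hcomm : ∀ μ ν : Λ, Commute ((x μ : A)) ((x ν : A)))
    (ht1 : t1 * t1 = 1) (ht2 : t2 * t2 = 1)
    (hσ1 : σ1 α1 = -α1) (hσ2 : σ2 α2 = -α2)
    (hσ12 : σ1 α2 = α1 + α2) (hσ21 : σ2 α1 = α1 + α2)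
    (hx1 : ∀ μ : Λ, t1 * (x μ : A) = (x (σ1 μ) : A) * t1)
    (hx2 : ∀ μ : Λ, t2 * (x μ : A) = (x (σ2 μ) : A) * t2) :
    (t1 * t2 * t1 = t2 * t1 * t2) ↔
      (((1 + t2) * (((x (-α2))⁻¹ : Aˣ) : A)) * ((1 + t1) * (((x (-α1))⁻¹ : Aˣ) : A))
          * ((1 + t2) * (((x (-α2))⁻¹ : Aˣ) : A))
        - ((((x (-α2) * x (-α1))⁻¹ : Aˣ) : A)
            - (((x (-α1) * x (-(α1 + α2)))⁻¹ : Aˣ) : A)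
            + (((x α2 * x (-(α1 + α2)))⁻¹ : Aˣ) : A))
          * ((1 + t2) * (((x (-α2))⁻¹ : Aˣ) : A))
      = ((1 + t1) * (((x (-α1))⁻¹ : Aˣ) : A)) * ((1 + t2) * (((x (-α2))⁻¹ : Aˣ) : A))
          * ((1 + t1) * (((x (-α1))⁻¹ : Aˣ) : A))
        - ((((x (-α1) * x (-α2))⁻¹ : Aˣ) : A)
            - (((x (-α2) * x (-(α1 + α2)))⁻¹ : Aˣ) : A)
            + (((x α1 * x (-(α1 + α2)))⁻¹ : Aˣ) : A))
          * ((1 + t1) * (((x (-α1))⁻¹ : Aˣ) : A))) := by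
  set X : Λ → A := fun μ => (((x μ)⁻¹ : Aˣ) : A) with hXdef
  have hfold : ∀ μ : Λ, (((x μ)⁻¹ : Aˣ) : A) = X μ := fun _ => rfl
  have hcX : ∀ μ ν : Λ, X μ * X ν = X ν * X μ := fun μ ν =>
    ((hcomm μ ν).units_inv_left.units_inv_right)
  have hX1 : ∀ μ : Λ, t1 * X μ = X (σ1 μ) * t1 := by
    intro μ
    apply (Units.mul_right_inj (x (σ1 μ))).mp
    have h1 : (x (σ1 μ) : A) * (t1 * (((x μ)⁻¹ : Aˣ) : A)) = t1 := by
      rw [← mul_assoc, ← hx1, Units.mul_inv_cancel_right]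
    have h2 : (x (σ1 μ) : A) * ((((x (σ1 μ))⁻¹ : Aˣ) : A) * t1) = t1 :=
      Units.mul_inv_cancel_left _ _
    exact h1.trans h2.symm
  have hX2 : ∀ μ : Λ, t2 * X μ = X (σ2 μ) * t2 := by
    intro μ
    apply (Units.mul_right_inj (x (σ2 μ))).mp
    have h1 : (x (σ2 μ) : A) * (t2 * (((x μ)⁻¹ : Aˣ) : A)) = t2 := by
      rw [← mul_assoc, ← hx2, Units.mul_inv_cancel_right]
    have h2 : (x (σ2 μ) : A) * ((((x (σ2 μ))⁻¹ : Aˣ) : A) * t2) = t2 :=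
      Units.mul_inv_cancel_left _ _
    exact h1.trans h2.symm
  have c2 : ∀ (μ ν : Λ) (y : A), X μ * (X ν * y) = X ν * (X μ * y) := by
    intro μ ν y; rw [← mul_assoc, hcX, mul_assoc]
  have E1 := expand_aux X σ1 σ2 t1 t2 α1 α2 hcX ht2 hσ1 hσ2 hσ12 hσ21 hX1 hX2
  have E2 := expand_aux X σ2 σ1 t2 t1 α2 α1 hcX ht1 hσ2 hσ1
      (by rw [hσ21, add_comm]) (by rw [hσ12, add_comm]) hX2 hX1
  rw [add_comm α2 α1] at E2
  simp only [mul_inv_rev, Units.val_mul, hfold]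
  rw [E1, E2]
  constructor
  · intro h
    rw [← h]
    simp only [mul_assoc, hcX, c2]
    abel
  · intro h
    have hd : (X α1 * (X (α1+α2) * X α2)) * (t2 * t1 * t2)
        - (X α1 * (X (α1+α2) * X α2)) * (t1 * t2 * t1)
        = (X (-α1) * X (-(α1+α2)) * X (-α2)
            + X (-α1) * X (-(α1+α2)) * X α2 * t2
            + X (-α2) * X (-(α1+α2)) * X α1 * t1
            + X α1 * X (α1+α2) * X (-α2) * (t1 * t2)
            + X (-α1) * X α2 * X (α1+α2) * (t2 * t1)
            + X α1 * X (α1+α2) * X α2 * (t2 * t1 * t2))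
          - (X (-α2) * X (-(α1+α2)) * X (-α1)
            + X (-α2) * X (-(α1+α2)) * X α1 * t1
            + X (-α1) * X (-(α1+α2)) * X α2 * t2
            + X α2 * X (α1+α2) * X (-α1) * (t2 * t1)
            + X (-α2) * X α1 * X (α1+α2) * (t1 * t2)
            + X α2 * X (α1+α2) * X α1 * (t1 * t2 * t1)) := by
      simp only [mul_assoc, hcX, c2]
      abel
    rw [h, sub_self] at hd
    have hd' : (X α1 * (X (α1+α2) * X α2)) * (t2 * t1 * t2)
        = (X α1 * (X (α1+α2) * X α2)) * (t1 * t2 * t1) := by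
      have := sub_eq_zero.mp hd
      exact this
    have hU : (X α1 * (X (α1+α2) * X α2))
        = (((x α1)⁻¹ * ((x (α1+α2))⁻¹ * (x α2)⁻¹) : Aˣ) : A) := by
      simp only [Units.val_mul, hfold]
    rw [hU] at hd'
    exact ((Units.mul_right_inj _).mp hd').symm
end
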